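/- arXiv:2410.00884 — 3 statements merged into one kernel-verified Lean document; each statement's English description precedes it below -/
import Mathlib

section
/- Tree-edge insertion correctness: Let G be a finite simple graph with real edge weights w, let T be a maximum spanning forest of G, and let e = (u,v) be a new edge not in G with u ≠ v such that u and v are not connected in G. Then for any real weight assigned to e, the forest T together with the edge e is a maximum spanning forest of the graph G together with the edge e. -/
/-- `F` is a spanning forest of `G`: a subgraph of `G` on all of `V` that is acyclic and
has the same connectivity relation as `G`. -/
def IsSpanningForest {V : Type*} (G F : SimpleGraph V) : Prop :=
  F ≤ G ∧ F.IsAcyclic ∧ ∀ u v : V, F.Reachable u v ↔ G.Reachable u v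

/-- Total weight of a graph: the sum of the weights of its edges. -/
noncomputable def forestWeight {V : Type*} [Fintype V] (w : Sym2 V → ℝ)
    (F : SimpleGraph V) : ℝ :=
  ∑ e ∈ (Set.toFinite F.edgeSet).toFinset, w e

/-- `T` is a maximum spanning forest of `G` with respect to the edge weights `w`. -/
def IsMaxSpanningForest {V : Type*} [Fintype V] (G : SimpleGraph V) (w : Sym2 V → ℝ)
    (T : SimpleGraph V) : Prop :=
  IsSpanningForest G T ∧
    ∀ F : SimpleGraph V, IsSpanningForest G F → forestWeight w F ≤ forestWeight w T

/-!
Spanning forests of `G` are exactly the maximal acyclic subgraphs of `G`. Since `u` and `v` lie in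
different components of `G`, the map `H ↦ H ⊔ edge u v` carries the maximal acyclic subgraphs of `G`
onto those of `G ⊔ edge u v`, and every one of the latter contains the new edge. Hence the spanning
forests of `G ⊔ edge u v` are the spanning forests of `G` plus the edge `s(u, v)`, and all their
weights are shifted by the same amount `w s(u, v)`.
-/

open SimpleGraph

section

variable {V : Type*} {G F : SimpleGraph V} {u v : V}

lemma isSpanningForest_iff_maximal :
    IsSpanningForest G F ↔ Maximal (fun H ↦ H ≤ G ∧ H.IsAcyclic) F := by
  refine ⟨fun ⟨hle, hF, hr⟩ ↦ ?_, fun h ↦ ⟨h.prop.1, h.prop.2, fun x y ↦ ?_⟩⟩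
  · exact (maximal_isAcyclic_iff_reachable_eq hle hF).2 (funext₂ fun x y ↦ propext (hr x y))
  · rw [reachable_eq_of_maximal_isAcyclic F h]

lemma IsSpanningForest.sup_edge (hF : IsSpanningForest G F) (h : ¬G.Reachable u v) :
    IsSpanningForest (G ⊔ edge u v) (F ⊔ edge u v) := by
  rw [isSpanningForest_iff_maximal] at hF ⊢
  obtain ⟨hFG, hFac⟩ := hF.prop
  refine ⟨⟨sup_le_sup_right hFG _, hFac.sup_edge_of_not_reachable fun h' ↦ h (h'.mono hFG)⟩,
    fun H ⟨hHG, hH⟩ hle ↦ sdiff_le_iff'.1 <| hF.le_of_ge ⟨sdiff_le_iff'.2 hHG, hH.anti sdiff_le⟩ ?_⟩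
  rw [← sdiff_edge F fun hadj ↦ h (hadj.reachable.mono hFG)]
  exact sdiff_le_sdiff_right (le_sup_left.trans hle)

lemma IsSpanningForest.edge_le (hF : IsSpanningForest (G ⊔ edge u v) F) (h : ¬G.Reachable u v) :
    edge u v ≤ F := by
  have huv : u ≠ v := fun huv ↦ h (huv ▸ .rfl)
  refine (edge_le_iff F).2 (Or.inr (by_contra fun hadj ↦ h ?_))
  have hFG : F ≤ G := sdiff_edge F hadj ▸ sdiff_le_iff'.2 hF.1
  have hr : (G ⊔ edge u v).Reachable u v := Adj.reachable (Or.inr (by simp [edge_adj, huv]))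
  exact ((hF.2.2 u v).2 hr).mono hFG

lemma IsSpanningForest.sdiff_edge (hF : IsSpanningForest (G ⊔ edge u v) F)
    (h : ¬G.Reachable u v) : IsSpanningForest G (F \ edge u v) := by
  rw [isSpanningForest_iff_maximal] at hF ⊢
  obtain ⟨hFG, hFac⟩ := hF.prop
  refine ⟨⟨sdiff_le_iff'.2 hFG, hFac.anti sdiff_le⟩, fun H ⟨hHG, hH⟩ hle ↦ ?_⟩
  have hHF : H ⊔ edge u v ≤ F :=
    hF.le_of_ge ⟨sup_le_sup_right hHG _, hH.sup_edge_of_not_reachable fun h' ↦ h (h'.mono hHG)⟩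
      (sdiff_le_iff'.1 hle)
  rw [← SimpleGraph.sdiff_edge H fun hadj ↦ h (hadj.reachable.mono hHG)]
  exact sdiff_le_sdiff_right (le_sup_left.trans hHF)

end

lemma forestWeight_sup_edge {V : Type*} [Fintype V] (w : Sym2 V → ℝ) {H : SimpleGraph V}
    {u v : V} (huv : u ≠ v) (hna : ¬H.Adj u v) :
    forestWeight w (H ⊔ edge u v) = forestWeight w H + w s(u, v) := by
  classical
  have hfe : (Set.toFinite (H ⊔ edge u v).edgeSet).toFinset =
      insert s(u, v) (Set.toFinite H.edgeSet).toFinset := by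
    ext e
    simp [edgeSet_sup, edgeSet_edge_of_ne huv]
  rw [forestWeight, hfe, Finset.sum_insert (by simpa using hna), forestWeight, add_comm]

theorem stmt_6_general {V : Type*} [Fintype V] (G : SimpleGraph V) (w : Sym2 V → ℝ)
    (T : SimpleGraph V) (hT : IsMaxSpanningForest G w T)
    (u v : V) (hnconn : ¬ G.Reachable u v) :
    IsMaxSpanningForest (G ⊔ SimpleGraph.edge u v) w (T ⊔ SimpleGraph.edge u v) := by
  obtain ⟨hT, hTmax⟩ := hT
  have huv : u ≠ v := fun h ↦ hnconn (h ▸ Reachable.rfl)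
  refine ⟨hT.sup_edge hnconn, fun F hF ↦ ?_⟩
  calc forestWeight w F = forestWeight w (F \ edge u v ⊔ edge u v) := by
        rw [sdiff_sup_cancel (hF.edge_le hnconn)]
    _ = forestWeight w (F \ edge u v) + w s(u, v) :=
        forestWeight_sup_edge w huv (by simp [edge_adj, huv])
    _ ≤ forestWeight w T + w s(u, v) := by gcongr; exact hTmax _ (hF.sdiff_edge hnconn)
    _ = forestWeight w (T ⊔ edge u v) :=
        (forestWeight_sup_edge w huv fun h ↦ hnconn (h.reachable.mono hT.1)).symm

/-- Tree-edge insertion correctness: if the endpoints of a new edge `e = s(u,v)` are not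
connected in `G`, then for any real weight assigned to `e` (i.e. for every weight
function `w`), `T` together with `e` is a maximum spanning forest of `G` together with `e`. -/
theorem stmt_6 {V : Type*} [Fintype V] (G : SimpleGraph V) (w : Sym2 V → ℝ)
    (T : SimpleGraph V) (hT : IsMaxSpanningForest G w T)
    (u v : V) (huv : u ≠ v) (hnew : ¬ G.Adj u v) (hnconn : ¬ G.Reachable u v) :
    IsMaxSpanningForest (G ⊔ SimpleGraph.edge u v) w (T ⊔ SimpleGraph.edge u v) :=
  stmt_6_general G w T hT u v hnconn
end

section
/- Non-tree-edge deletion correctness: Let G be a finite simple graph with real edge weights w, let T be a maximum spanning forest of G, and let e' be an edge of G that is not an edge of T. Then T is a maximum spanning forest of the graph obtained from G by deleting e'. -/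
namespace SimpleGraph

variable {V : Type*} {G H T : SimpleGraph V}

theorem le_deleteEdges_of_disjoint {s : Set (Sym2 V)} (hTG : T ≤ G)
    (hs : Disjoint T.edgeSet s) : T ≤ G.deleteEdges s :=
  calc T = T.deleteEdges s := (deleteEdges_eq_self.mpr hs).symm
    _ ≤ G.deleteEdges s := deleteEdges_mono hTG

theorem reachable_iff_of_le_of_le (hTH : T ≤ H) (hHG : H ≤ G)
    (hT : ∀ u v : V, T.Reachable u v ↔ G.Reachable u v) (u v : V) :
    H.Reachable u v ↔ G.Reachable u v :=
  ⟨fun h => h.mono hHG, fun h => ((hT u v).mpr h).mono hTH⟩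

end SimpleGraph

namespace IsSpanningForest

open SimpleGraph

variable {V : Type*} {G H T F : SimpleGraph V}

theorem of_le_of_le (hT : IsSpanningForest G T) (hTH : T ≤ H) (hHG : H ≤ G) :
    IsSpanningForest H T :=
  ⟨hTH, hT.2.1,
    fun u v => (hT.2.2 u v).trans (reachable_iff_of_le_of_le hTH hHG hT.2.2 u v).symm⟩

theorem of_isSpanningForest_le (hT : IsSpanningForest G T) (hTH : T ≤ H) (hHG : H ≤ G)
    (hF : IsSpanningForest H F) : IsSpanningForest G F :=
  ⟨hF.1.trans hHG, hF.2.1,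
    fun u v => (hF.2.2 u v).trans (reachable_iff_of_le_of_le hTH hHG hT.2.2 u v)⟩

end IsSpanningForest

theorem IsMaxSpanningForest.of_le_of_le {V : Type*} [Fintype V] {G H T : SimpleGraph V}
    {w : Sym2 V → ℝ} (hT : IsMaxSpanningForest G w T) (hTH : T ≤ H) (hHG : H ≤ G) :
    IsMaxSpanningForest H w T :=
  ⟨hT.1.of_le_of_le hTH hHG,
    fun _ hF => hT.2 _ (hT.1.of_isSpanningForest_le hTH hHG hF)⟩

theorem stmt_11_general {V : Type*} [Fintype V] (G : SimpleGraph V) (w : Sym2 V → ℝ)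
    (T : SimpleGraph V) (hT : IsMaxSpanningForest G w T)
    (x y : V) (hnt : s(x, y) ∉ T.edgeSet) :
    IsMaxSpanningForest (G.deleteEdges {s(x, y)}) w T :=
  hT.of_le_of_le
    (SimpleGraph.le_deleteEdges_of_disjoint hT.1.1 (Set.disjoint_singleton_right.mpr hnt))
    (G.deleteEdges_le _)

/-- Non-tree-edge deletion correctness: deleting from `G` an edge `e' = s(x,y)` that does
not belong to the maximum spanning forest `T` leaves `T` a maximum spanning forest. -/
theorem stmt_11 {V : Type*} [Fintype V] (G : SimpleGraph V) (w : Sym2 V → ℝ)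
    (T : SimpleGraph V) (hT : IsMaxSpanningForest G w T)
    (x y : V) (he' : G.Adj x y) (hnt : s(x, y) ∉ T.edgeSet) :
    IsMaxSpanningForest (G.deleteEdges {s(x, y)}) w T :=
  stmt_11_general G w T hT x y hnt
end

section
/- Single-step insertion invariant of the MST framework (combining the cases of Algorithm 1): Let G be a finite simple graph with real edge weights w, let T be a maximum spanning forest of G, and let e = (u,v) be a new edge not in G with u ≠ v and w(e) ≥ w(f) for every edge f of G. Define a forest T' as follows: if u and v are not connected in G, then T' is T together with e; otherwise, letting e_min be an edge of minimum weight on the unique path in T from u to v, set T' = (T minus e_min) plus e if w(e_min) < w(e), and T' = T if w(e_min) ≥ w(e). Then T' is a maximum spanning forest of the graph G together with the edge e. -/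
/-!
Exchange argument. Let `e = s(u, v)`. A spanning forest `F` of `G + e` either avoids `e`, and is
then a spanning forest of `G`, so `w F ≤ w T`; or it contains `e`. In the latter case, deleting
`e` separates `u` from `v` in `F`, so some edge `f` of the `T`-path from `u` to `v` joins the two
pieces, and `F - e + f` is a spanning forest of `G`; hence
`w F ≤ w T - w f + w e ≤ w T - w e_min + w e`. The forest proposed in each case attains the larger
of these two bounds. If `u` and `v` are not connected in `G`, every spanning forest of `G + e`
contains `e`, and deleting it leaves a spanning forest of `G`.
-/

open SimpleGraph

namespace SimpleGraph

variable {V : Type*} {G F T : SimpleGraph V} {a b c d u v x y : V}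

lemma reachable_edge (a b : V) : (edge a b).Reachable a b := by
  by_cases hab : a = b
  · exact hab ▸ .rfl
  · exact Adj.reachable (by simp [edge_adj, hab])

lemma reachable_sup_edge_iff :
    (G ⊔ edge a b).Reachable x y ↔ G.Reachable x y ∨
      (G.Reachable x a ∧ G.Reachable b y) ∨ (G.Reachable x b ∧ G.Reachable a y) := by
  constructor
  · rintro ⟨p⟩
    induction p with
    | nil => exact .inl .rfl
    | cons h _ ih =>
      rcases h with h | h
      · have := h.reachable
        grind [Reachable.trans]
      · grind [Reachable.refl]
  · have hab : (G ⊔ edge a b).Reachable a b := (reachable_edge a b).mono le_sup_right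
    rintro (h | ⟨h₁, h₂⟩ | ⟨h₁, h₂⟩)
    · exact h.mono le_sup_left
    · exact ((h₁.mono le_sup_left).trans hab).trans (h₂.mono le_sup_left)
    · exact ((h₁.mono le_sup_left).trans hab.symm).trans (h₂.mono le_sup_left)

lemma reachable_sup_edge_of_reachable (h : G.Reachable a b) :
    (G ⊔ edge a b).Reachable = G.Reachable := by
  ext x y
  rw [reachable_sup_edge_iff]
  grind [Reachable.trans, Reachable.symm]

lemma deleteEdges_sup_edge_of_adj (h : G.Adj a b) : G.deleteEdges {s(a, b)} ⊔ edge a b = G := by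
  ext x y
  simp only [sup_adj, deleteEdges_adj, edge_adj, Set.mem_singleton_iff]
  grind [Adj.ne, Adj.symm]

lemma le_of_le_sup_edge (hle : F ≤ G ⊔ edge a b) (h : ¬F.Adj a b) : F ≤ G := by
  intro x y hxy
  rcases hle hxy with hG | hE
  · exact hG
  · grind [Adj.symm]

lemma deleteEdges_le_of_le_sup_edge (hle : F ≤ G ⊔ edge a b) : F.deleteEdges {s(a, b)} ≤ G := by
  rw [deleteEdges_le_iff, sup_comm]
  exact hle

lemma IsAcyclic.not_reachable_deleteEdges_of_adj (hF : F.IsAcyclic) (h : F.Adj a b) :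
    ¬(F.deleteEdges {s(a, b)}).Reachable a b :=
  isBridge_iff.mp (isAcyclic_iff_forall_adj_isBridge.mp hF h)

lemma IsAcyclic.not_reachable_deleteEdges_of_mem_edges (hT : T.IsAcyclic) {p : T.Walk u v}
    (hp : p.IsPath) {e : Sym2 V} (he : e ∈ p.edges) : ¬(T.deleteEdges {e}).Reachable u v := by
  classical
  rintro ⟨q⟩
  have hpq : p = q.toPath.val.mapLe (deleteEdges_le _) := congrArg Subtype.val <|
    (hT.subsingleton_path u v).elim ⟨p, hp⟩ ⟨_, q.toPath.2.mapLe _⟩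
  have := q.toPath.val.edges_subset_edgeSet (by rwa [hpq, Walk.edges_mapLe_eq_edges] at he)
  simp [edgeSet_deleteEdges] at this

end SimpleGraph

section SpanningForest

variable {V : Type*} {G H F : SimpleGraph V} {a b c d : V}

lemma IsSpanningForest.of_le_of_le_s13 (hF : IsSpanningForest H F) (hFG : F ≤ G) (hGH : G ≤ H) :
    IsSpanningForest G F :=
  ⟨hFG, hF.2.1, fun x y => ⟨(·.mono hFG), fun h => (hF.2.2 x y).mpr (h.mono hGH)⟩⟩

lemma IsSpanningForest.sup_edge_of_reachable (hF : IsSpanningForest G F) (h : G.Reachable a b) :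
    IsSpanningForest (G ⊔ edge a b) F :=
  ⟨hF.1.trans le_sup_left, hF.2.1, by rw [reachable_sup_edge_of_reachable h]; exact hF.2.2⟩

lemma IsSpanningForest.sup_edge_of_not_reachable (hF : IsSpanningForest G F)
    (h : ¬G.Reachable a b) : IsSpanningForest (G ⊔ edge a b) (F ⊔ edge a b) :=
  ⟨sup_le_sup_right hF.1 _, hF.2.1.sup_edge_of_not_reachable (by rwa [hF.2.2]),
    fun x y => by simp only [reachable_sup_edge_iff, hF.2.2]⟩

lemma IsSpanningForest.exchange (hF : IsSpanningForest G F) (hab : F.Adj a b) (hcd : G.Adj c d)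
    (hsep : ¬(F.deleteEdges {s(a, b)}).Reachable c d) :
    IsSpanningForest G (F.deleteEdges {s(a, b)} ⊔ edge c d) := by
  set F₀ := F.deleteEdges {s(a, b)}
  have hF₀ : F₀ ≤ G := (deleteEdges_le _).trans hF.1
  have hsplit : F₀ ⊔ edge a b = F := deleteEdges_sup_edge_of_adj hab
  have hcd' : (F₀ ⊔ edge a b).Reachable c d := hsplit ▸ (hF.2.2 c d).mpr hcd.reachable
  have hab' : (F₀ ⊔ edge c d).Reachable a b := by
    have hcd'' : (F₀ ⊔ edge c d).Reachable c d := (reachable_edge c d).mono le_sup_right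
    rw [reachable_sup_edge_iff] at hcd'
    rcases hcd' with h | ⟨hca, hbd⟩ | ⟨hcb, had⟩
    · exact absurd h hsep
    · exact ((hca.symm.mono le_sup_left).trans hcd'').trans (hbd.symm.mono le_sup_left)
    · exact ((had.mono le_sup_left).trans hcd''.symm).trans (hcb.mono le_sup_left)
  have hle : F₀ ⊔ edge c d ≤ G := sup_le hF₀ ((edge_le_iff G).mpr (.inr hcd))
  refine ⟨hle, (hF.2.1.anti (deleteEdges_le _)).sup_edge_of_not_reachable hsep,
    fun x y => ⟨(·.mono hle), fun h => ?_⟩⟩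
  have hxy : (F₀ ⊔ edge a b).Reachable x y := hsplit ▸ (hF.2.2 x y).mpr h
  rw [← reachable_sup_edge_of_reachable hab', sup_right_comm]
  exact hxy.mono le_sup_left

lemma IsSpanningForest.deleteEdges_of_not_reachable (hF : IsSpanningForest (G ⊔ edge a b) F)
    (h : ¬G.Reachable a b) : F.Adj a b ∧ IsSpanningForest G (F.deleteEdges {s(a, b)}) := by
  have hFab : F.Adj a b := by
    by_contra hn
    exact h (((hF.2.2 a b).mpr ((reachable_edge a b).mono le_sup_right)).mono
      (le_of_le_sup_edge hF.1 hn))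
  set F₀ := F.deleteEdges {s(a, b)}
  have hF₀ : F₀ ≤ G := deleteEdges_le_of_le_sup_edge hF.1
  refine ⟨hFab, hF₀, hF.2.1.anti (deleteEdges_le _), fun x y => ⟨(·.mono hF₀), fun hxy => ?_⟩⟩
  have hFxy : F.Reachable x y := (hF.2.2 x y).mpr (hxy.mono le_sup_left)
  rw [← deleteEdges_sup_edge_of_adj hFab, reachable_sup_edge_iff] at hFxy
  rcases hFxy with hF₀xy | ⟨hxa, hby⟩ | ⟨hxb, hay⟩
  · exact hF₀xy
  · exact absurd (((hxa.mono hF₀).symm.trans hxy).trans (hby.mono hF₀).symm) h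
  · exact absurd ((hay.mono hF₀).trans (hxy.symm.trans (hxb.mono hF₀))) h

end SpanningForest

section Weight

variable {V : Type*} [Fintype V] (w : Sym2 V → ℝ) {F : SimpleGraph V} {a b : V}

lemma forestWeight_sup_edge_s13 (hab : a ≠ b) (h : ¬F.Adj a b) :
    forestWeight w (F ⊔ edge a b) = forestWeight w F + w s(a, b) := by
  classical
  have hset : (Set.toFinite (F ⊔ edge a b).edgeSet).toFinset =
      insert s(a, b) (Set.toFinite F.edgeSet).toFinset := by
    ext e
    simp [edgeSet_sup, edgeSet_edge_of_ne hab]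
  rw [forestWeight, forestWeight, hset, Finset.sum_insert (by simpa using h), add_comm]

lemma forestWeight_eq_deleteEdges_add (h : F.Adj a b) :
    forestWeight w F = forestWeight w (F.deleteEdges {s(a, b)}) + w s(a, b) := by
  conv_lhs => rw [← deleteEdges_sup_edge_of_adj h]
  exact forestWeight_sup_edge_s13 w h.ne (by simp)

end Weight

section MaxSpanningForest

variable {V : Type*} [Fintype V] {G T F : SimpleGraph V} {w : Sym2 V → ℝ} {u v : V}

lemma IsMaxSpanningForest.sup_edge_of_not_reachable (hT : IsMaxSpanningForest G w T)
    (h : ¬G.Reachable u v) : IsMaxSpanningForest (G ⊔ edge u v) w (T ⊔ edge u v) := by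
  have hTuv : ¬T.Reachable u v := by rwa [hT.1.2.2]
  refine ⟨hT.1.sup_edge_of_not_reachable h, fun F hF => ?_⟩
  obtain ⟨hFuv, hF₀⟩ := hF.deleteEdges_of_not_reachable h
  rw [forestWeight_eq_deleteEdges_add w hFuv,
    forestWeight_sup_edge_s13 w hFuv.ne fun h' => hTuv h'.reachable]
  exact add_le_add_left (hT.2 _ hF₀) _

lemma IsMaxSpanningForest.forestWeight_le_max (hT : IsMaxSpanningForest G w T) (p : T.Walk u v)
    {m : ℝ} (hm : ∀ f ∈ p.edges, m ≤ w f) (hF : IsSpanningForest (G ⊔ edge u v) F) :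
    forestWeight w F ≤ max (forestWeight w T) (forestWeight w T - m + w s(u, v)) := by
  by_cases hFuv : F.Adj u v
  · set F₀ := F.deleteEdges {s(u, v)}
    have hsep : ¬F₀.Reachable u v := hF.2.1.not_reachable_deleteEdges_of_adj hFuv
    -- an edge of `p` leaving the component of `u` in `F₀` can replace `s(u, v)`
    obtain ⟨d, hd, hdu, hdv⟩ := p.exists_boundary_dart {x | F₀.Reachable u x} .rfl hsep
    have hdsep : ¬F₀.Reachable d.fst d.snd := fun h => hdv (hdu.trans h)
    have hdG : G.Adj d.fst d.snd := hT.1.1 d.adj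
    have hF' : IsSpanningForest G (F₀ ⊔ edge d.fst d.snd) :=
      (hF.exchange hFuv ((le_sup_left : G ≤ _) hdG) hdsep).of_le_of_le_s13
        (sup_le (deleteEdges_le_of_le_sup_edge hF.1) ((edge_le_iff G).mpr (.inr hdG))) le_sup_left
    have hF'T := hT.2 _ hF'
    rw [forestWeight_sup_edge_s13 w d.adj.ne fun h => hdsep h.reachable] at hF'T
    have hmd : m ≤ w s(d.fst, d.snd) := hm _ (List.mem_map_of_mem hd)
    rw [forestWeight_eq_deleteEdges_add w hFuv]
    exact le_max_of_le_right (by linarith)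
  · exact le_max_of_le_left (hT.2 F (hF.of_le_of_le_s13 (le_of_le_sup_edge hF.1 hFuv) le_sup_left))

lemma IsMaxSpanningForest.sup_edge_of_forall_le (hT : IsMaxSpanningForest G w T)
    (p : T.Walk u v) (hp : ∀ f ∈ p.edges, w s(u, v) ≤ w f) :
    IsMaxSpanningForest (G ⊔ edge u v) w T := by
  refine ⟨hT.1.sup_edge_of_reachable ((hT.1.2.2 u v).mp ⟨p⟩), fun F hF => ?_⟩
  simpa using hT.forestWeight_le_max p hp hF

lemma IsMaxSpanningForest.deleteEdges_sup_edge (hT : IsMaxSpanningForest G w T)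
    {p : T.Walk u v} (hp : p.IsPath) {e : Sym2 V} (he : e ∈ p.edges)
    (hmin : ∀ f ∈ p.edges, w e ≤ w f) (hlt : w e < w s(u, v)) :
    IsMaxSpanningForest (G ⊔ edge u v) w (T.deleteEdges {e} ⊔ edge u v) := by
  induction e with | h a b =>
  have hab : T.Adj a b := p.adj_of_mem_edges he
  have hsep := hT.1.2.1.not_reachable_deleteEdges_of_mem_edges hp he
  have huv : u ≠ v := by rintro rfl; exact hsep .rfl
  have hT' := (hT.1.sup_edge_of_reachable ((hT.1.2.2 u v).mp ⟨p⟩)).exchange hab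
    ((le_sup_right : edge u v ≤ G ⊔ _) ((edge_adj ..).mpr ⟨.inl ⟨rfl, rfl⟩, huv⟩)) hsep
  refine ⟨hT', fun F hF => ?_⟩
  have hbound := hT.forestWeight_le_max p hmin hF
  rw [forestWeight_eq_deleteEdges_add w hab] at hbound
  rw [forestWeight_sup_edge_s13 w huv fun h => hsep h.reachable]
  rcases le_max_iff.mp hbound with h | h <;> linarith

end MaxSpanningForest

theorem stmt_13_general {V : Type*} [Fintype V] (G : SimpleGraph V) (w : Sym2 V → ℝ)
    (T : SimpleGraph V) (hT : IsMaxSpanningForest G w T)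
    (u v : V) :
    (¬ G.Reachable u v →
      IsMaxSpanningForest (G ⊔ SimpleGraph.edge u v) w (T ⊔ SimpleGraph.edge u v)) ∧
    (∀ (p : T.Walk u v), p.IsPath →
      ∀ emin ∈ p.edges, (∀ f ∈ p.edges, w emin ≤ w f) →
        (w emin < w s(u, v) →
          IsMaxSpanningForest (G ⊔ SimpleGraph.edge u v) w
            ((T.deleteEdges {emin}) ⊔ SimpleGraph.edge u v)) ∧
        (w s(u, v) ≤ w emin →
          IsMaxSpanningForest (G ⊔ SimpleGraph.edge u v) w T)) :=
  ⟨hT.sup_edge_of_not_reachable, fun p hp _ he hmin =>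
    ⟨hT.deleteEdges_sup_edge hp he hmin,
      fun hle => hT.sup_edge_of_forall_le p fun f hf => hle.trans (hmin f hf)⟩⟩

/-- Single-step insertion invariant of the MST framework (combining the cases of
Algorithm 1) for a heaviest new edge `e = s(u,v)` not in `G`:
(i) if `u, v` are not connected in `G`, then `T + e` is a maximum spanning forest of `G + e`;
(ii) otherwise, with `e_min` a minimum-weight edge on the unique `T`-path from `u` to `v`:
if `w e_min < w e` then `T - e_min + e` is a maximum spanning forest of `G + e`,
and if `w e ≤ w e_min` then `T` itself is. -/
theorem stmt_13 {V : Type*} [Fintype V] (G : SimpleGraph V) (w : Sym2 V → ℝ)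
    (T : SimpleGraph V) (hT : IsMaxSpanningForest G w T)
    (u v : V) (huv : u ≠ v) (hnew : ¬ G.Adj u v)
    (hw : ∀ f ∈ G.edgeSet, w f ≤ w s(u, v)) :
    (¬ G.Reachable u v →
      IsMaxSpanningForest (G ⊔ SimpleGraph.edge u v) w (T ⊔ SimpleGraph.edge u v)) ∧
    (∀ (p : T.Walk u v), p.IsPath →
      ∀ emin ∈ p.edges, (∀ f ∈ p.edges, w emin ≤ w f) →
        (w emin < w s(u, v) →
          IsMaxSpanningForest (G ⊔ SimpleGraph.edge u v) w
            ((T.deleteEdges {emin}) ⊔ SimpleGraph.edge u v)) ∧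
        (w s(u, v) ≤ w emin →
          IsMaxSpanningForest (G ⊔ SimpleGraph.edge u v) w T)) :=
  stmt_13_general G w T hT u v
end
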